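/- arXiv:1605.05351 — 10 statements merged into one kernel-verified Lean document; each statement's English description precedes it below -/
import Mathlib

section
/- Suppose y* ≠ 0 maximizes ‖y‖² over y ∈ Ω and ȳ minimizes ‖y‖² over y ∈ D. Then: (1) the vector ȳ / ‖ȳ‖² also maximizes ‖y‖² over Ω; (2) the vector y* / ‖y*‖² also minimizes ‖y‖² over D; (3) the maximizer of ‖y‖² over Ω is unique, i.e. any point of Ω attaining the maximum of ‖y‖² over Ω equals y*. -/
/-!
Inversion in the unit sphere, `y ↦ y / ‖y‖²`, is an involution of `ℝⁿ ∖ {0}` that inverts squared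
norms and turns each half-space `⟪zᵢ, y⟫ ≥ 1` into the ball `‖y‖² ≤ ⟪zᵢ, y⟫` through the origin, so
it exchanges `D` and `Ω ∖ {0}`. Hence `max_Ω ‖y‖²` and `min_D ‖y‖²` are reciprocal and inversion
swaps the optimizers. A second maximizer over `Ω` would invert to a second minimum-norm point of
the convex set `D`, which strict convexity of the Euclidean norm rules out.
-/

open RealInnerProductSpace

section Inversion

variable {E : Type*} [NormedAddCommGroup E] [NormedSpace ℝ E]

noncomputable def unitInversion (y : E) : E := (‖y‖ ^ 2)⁻¹ • y

@[simp]
theorem unitInversion_zero : unitInversion (0 : E) = 0 := by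
  simp [unitInversion]

theorem norm_sq_unitInversion (y : E) : ‖unitInversion y‖ ^ 2 = (‖y‖ ^ 2)⁻¹ := by
  rw [unitInversion, norm_smul, mul_pow, norm_inv, norm_pow, norm_norm, inv_pow, ← inv_pow]
  rcases eq_or_ne ‖y‖ 0 with hy | hy
  · simp [hy]
  · field_simp

@[simp]
theorem unitInversion_unitInversion (y : E) : unitInversion (unitInversion y) = y := by
  rcases eq_or_ne y 0 with rfl | hy
  · simp
  · rw [unitInversion, norm_sq_unitInversion, inv_inv, unitInversion, smul_smul,
      mul_inv_cancel₀ (by positivity), one_smul]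

theorem unitInversion_ne_zero {y : E} (hy : y ≠ 0) : unitInversion y ≠ 0 := by
  intro h
  exact hy (by simpa using congrArg unitInversion h)

end Inversion

theorem Convex.eq_of_isMinOn_norm_sq {E : Type*} [NormedAddCommGroup E] [NormedSpace ℝ E]
    [StrictConvexSpace ℝ E] {s : Set E} (hs : Convex ℝ s) {x y : E} (hx : x ∈ s) (hy : y ∈ s)
    (hxmin : IsMinOn (fun w => ‖w‖ ^ 2) s x) (hymin : IsMinOn (fun w => ‖w‖ ^ 2) s y) :
    x = y := by
  have hxy : ‖x‖ = ‖y‖ := by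
    refine (pow_left_inj₀ (norm_nonneg x) (norm_nonneg y) two_ne_zero).mp ?_
    exact le_antisymm (isMinOn_iff.mp hxmin y hy) (isMinOn_iff.mp hymin x hx)
  by_contra hne
  have hmid : (1 / 2 : ℝ) • (x + y) ∈ s := by
    rw [smul_add]
    exact hs hx hy (by norm_num) (by norm_num) (by norm_num)
  have hlt := (norm_midpoint_lt_iff hxy).mpr hne
  exact (pow_lt_pow_left₀ hlt (norm_nonneg _) two_ne_zero).not_ge (isMinOn_iff.mp hxmin _ hmid)

section Feasibility

variable {E ι : Type*} [NormedAddCommGroup E] [InnerProductSpace ℝ E]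

def affineFeasibleSet (z : ι → E) : Set E := {y | ∀ i, 1 ≤ ⟪z i, y⟫}

def quadraticFeasibleSet (z : ι → E) : Set E := {y | ∀ i, ‖y‖ ^ 2 ≤ ⟪z i, y⟫}

variable {z : ι → E}

theorem convex_affineFeasibleSet : Convex ℝ (affineFeasibleSet z) := by
  intro x hx y hy a b ha hb hab i
  rw [inner_add_right, real_inner_smul_right, real_inner_smul_right]
  nlinarith [mul_le_mul_of_nonneg_left (hx i) ha, mul_le_mul_of_nonneg_left (hy i) hb]

theorem ne_zero_of_mem_affineFeasibleSet [Nonempty ι] {y : E} (hy : y ∈ affineFeasibleSet z) :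
    y ≠ 0 := by
  rintro rfl
  exact absurd (hy (Classical.arbitrary ι)) (by simp)

theorem unitInversion_mem_affineFeasibleSet_iff {y : E} (hy : y ≠ 0) :
    unitInversion y ∈ affineFeasibleSet z ↔ y ∈ quadraticFeasibleSet z := by
  refine forall_congr' fun i => ?_
  rw [unitInversion, real_inner_smul_right, one_le_inv_mul₀ (by positivity)]

theorem unitInversion_mem_quadraticFeasibleSet_iff {y : E} (hy : y ≠ 0) :
    unitInversion y ∈ quadraticFeasibleSet z ↔ y ∈ affineFeasibleSet z := by
  rw [← unitInversion_mem_affineFeasibleSet_iff (unitInversion_ne_zero hy),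
    unitInversion_unitInversion]

end Feasibility

section Duality

variable {E ι : Type*} [NormedAddCommGroup E] [InnerProductSpace ℝ E] {z : ι → E} {ystar ybar : E}

theorem norm_sq_eq_inv_of_isMaxOn_of_isMinOn (hystar : ystar ∈ quadraticFeasibleSet z)
    (hystar0 : ystar ≠ 0) (hmax : IsMaxOn (fun y => ‖y‖ ^ 2) (quadraticFeasibleSet z) ystar)
    (hybar : ybar ∈ affineFeasibleSet z) (hybar0 : ybar ≠ 0)
    (hmin : IsMinOn (fun y => ‖y‖ ^ 2) (affineFeasibleSet z) ybar) :
    ‖ybar‖ ^ 2 = (‖ystar‖ ^ 2)⁻¹ := by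
  have hle : ‖ybar‖ ^ 2 ≤ (‖ystar‖ ^ 2)⁻¹ := by
    simpa only [norm_sq_unitInversion] using
      isMinOn_iff.mp hmin _ ((unitInversion_mem_affineFeasibleSet_iff hystar0).mpr hystar)
  have hge : (‖ybar‖ ^ 2)⁻¹ ≤ ‖ystar‖ ^ 2 := by
    simpa only [norm_sq_unitInversion] using
      isMaxOn_iff.mp hmax _ ((unitInversion_mem_quadraticFeasibleSet_iff hybar0).mpr hybar)
  exact le_antisymm hle ((inv_le_comm₀ (by positivity) (by positivity)).mp hge)

theorem isMaxOn_unitInversion_of_isMinOn (hystar : ystar ∈ quadraticFeasibleSet z)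
    (hystar0 : ystar ≠ 0) (hmax : IsMaxOn (fun y => ‖y‖ ^ 2) (quadraticFeasibleSet z) ystar)
    (hybar : ybar ∈ affineFeasibleSet z) (hybar0 : ybar ≠ 0)
    (hmin : IsMinOn (fun y => ‖y‖ ^ 2) (affineFeasibleSet z) ybar) :
    IsMaxOn (fun y => ‖y‖ ^ 2) (quadraticFeasibleSet z) (unitInversion ybar) := by
  rw [isMaxOn_iff, norm_sq_unitInversion,
    norm_sq_eq_inv_of_isMaxOn_of_isMinOn hystar hystar0 hmax hybar hybar0 hmin, inv_inv]
  exact isMaxOn_iff.mp hmax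

theorem isMinOn_unitInversion_of_isMaxOn (hystar : ystar ∈ quadraticFeasibleSet z)
    (hystar0 : ystar ≠ 0) (hmax : IsMaxOn (fun y => ‖y‖ ^ 2) (quadraticFeasibleSet z) ystar)
    (hybar : ybar ∈ affineFeasibleSet z) (hybar0 : ybar ≠ 0)
    (hmin : IsMinOn (fun y => ‖y‖ ^ 2) (affineFeasibleSet z) ybar) :
    IsMinOn (fun y => ‖y‖ ^ 2) (affineFeasibleSet z) (unitInversion ystar) := by
  rw [isMinOn_iff, norm_sq_unitInversion,
    ← norm_sq_eq_inv_of_isMaxOn_of_isMinOn hystar hystar0 hmax hybar hybar0 hmin]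
  exact isMinOn_iff.mp hmin

theorem eq_of_isMaxOn_quadraticFeasibleSet (hystar : ystar ∈ quadraticFeasibleSet z)
    (hystar0 : ystar ≠ 0) (hmax : IsMaxOn (fun y => ‖y‖ ^ 2) (quadraticFeasibleSet z) ystar)
    (hybar : ybar ∈ affineFeasibleSet z) (hybar0 : ybar ≠ 0)
    (hmin : IsMinOn (fun y => ‖y‖ ^ 2) (affineFeasibleSet z) ybar)
    {y : E} (hy : y ∈ quadraticFeasibleSet z)
    (hymax : IsMaxOn (fun y => ‖y‖ ^ 2) (quadraticFeasibleSet z) y) : y = ystar := by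
  have hy0 : y ≠ 0 := by
    rintro rfl
    exact absurd (isMaxOn_iff.mp hymax ystar hystar) (by simpa using hystar0)
  have hinv : unitInversion y = unitInversion ystar :=
    convex_affineFeasibleSet.eq_of_isMinOn_norm_sq
      ((unitInversion_mem_affineFeasibleSet_iff hy0).mpr hy)
      ((unitInversion_mem_affineFeasibleSet_iff hystar0).mpr hystar)
      (isMinOn_unitInversion_of_isMaxOn hy hy0 hymax hybar hybar0 hmin)
      (isMinOn_unitInversion_of_isMaxOn hystar hystar0 hmax hybar hybar0 hmin)
  simpa using congrArg unitInversion hinv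

end Duality

theorem optimal_solutions_relation_general
    (n m : ℕ) (hm : 0 < m)
    (z : Fin m → EuclideanSpace ℝ (Fin n))
    (D Ω : Set (EuclideanSpace ℝ (Fin n)))
    (hD : D = {y | ∀ i : Fin m, 1 ≤ ⟪z i, y⟫})
    (hΩ : Ω = {y | ∀ i : Fin m, ‖y‖ ^ 2 ≤ ⟪z i, y⟫})
    (ystar ybar : EuclideanSpace ℝ (Fin n))
    (hystar : ystar ∈ Ω) (hystar0 : ystar ≠ 0)
    (hystarMax : ∀ y ∈ Ω, ‖y‖ ^ 2 ≤ ‖ystar‖ ^ 2)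
    (hybar : ybar ∈ D)
    (hybarMin : ∀ y ∈ D, ‖ybar‖ ^ 2 ≤ ‖y‖ ^ 2) :
    ((‖ybar‖ ^ 2)⁻¹ • ybar ∈ Ω ∧
      ∀ y ∈ Ω, ‖y‖ ^ 2 ≤ ‖(‖ybar‖ ^ 2)⁻¹ • ybar‖ ^ 2) ∧
    ((‖ystar‖ ^ 2)⁻¹ • ystar ∈ D ∧
      ∀ y ∈ D, ‖(‖ystar‖ ^ 2)⁻¹ • ystar‖ ^ 2 ≤ ‖y‖ ^ 2) ∧
    (∀ y ∈ Ω, (∀ w ∈ Ω, ‖w‖ ^ 2 ≤ ‖y‖ ^ 2) → y = ystar) := by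
  change D = affineFeasibleSet z at hD
  change Ω = quadraticFeasibleSet z at hΩ
  subst hD hΩ
  have : Nonempty (Fin m) := ⟨⟨0, hm⟩⟩
  have hybar0 : ybar ≠ 0 := ne_zero_of_mem_affineFeasibleSet hybar
  have hmax : IsMaxOn (fun y => ‖y‖ ^ 2) (quadraticFeasibleSet z) ystar :=
    isMaxOn_iff.mpr hystarMax
  have hmin : IsMinOn (fun y => ‖y‖ ^ 2) (affineFeasibleSet z) ybar := isMinOn_iff.mpr hybarMin
  refine ⟨⟨(unitInversion_mem_quadraticFeasibleSet_iff hybar0).mpr hybar,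
      isMaxOn_iff.mp (isMaxOn_unitInversion_of_isMinOn hystar hystar0 hmax hybar hybar0 hmin)⟩,
    ⟨(unitInversion_mem_affineFeasibleSet_iff hystar0).mpr hystar,
      isMinOn_iff.mp (isMinOn_unitInversion_of_isMaxOn hystar hystar0 hmax hybar hybar0 hmin)⟩,
    fun y hy hymax => eq_of_isMaxOn_quadraticFeasibleSet hystar hystar0 hmax hybar hybar0 hmin hy
      (isMaxOn_iff.mpr hymax)⟩

/-- If `y* ≠ 0` maximizes `‖y‖²` over `Ω` and `ȳ` minimizes `‖y‖²` over `D`, then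
(1) `ȳ/‖ȳ‖²` maximizes `‖y‖²` over `Ω`, (2) `y*/‖y*‖²` minimizes `‖y‖²` over `D`,
and (3) the maximizer over `Ω` is unique. -/
theorem optimal_solutions_relation
    (n m : ℕ) (hn : 0 < n) (hm : 0 < m)
    (z : Fin m → EuclideanSpace ℝ (Fin n))
    (D Ω : Set (EuclideanSpace ℝ (Fin n)))
    (hD : D = {y | ∀ i : Fin m, 1 ≤ ⟪z i, y⟫})
    (hΩ : Ω = {y | ∀ i : Fin m, ‖y‖ ^ 2 ≤ ⟪z i, y⟫})
    (ystar ybar : EuclideanSpace ℝ (Fin n))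
    (hystar : ystar ∈ Ω) (hystar0 : ystar ≠ 0)
    (hystarMax : ∀ y ∈ Ω, ‖y‖ ^ 2 ≤ ‖ystar‖ ^ 2)
    (hybar : ybar ∈ D)
    (hybarMin : ∀ y ∈ D, ‖ybar‖ ^ 2 ≤ ‖y‖ ^ 2) :
    ((‖ybar‖ ^ 2)⁻¹ • ybar ∈ Ω ∧
      ∀ y ∈ Ω, ‖y‖ ^ 2 ≤ ‖(‖ybar‖ ^ 2)⁻¹ • ybar‖ ^ 2) ∧
    ((‖ystar‖ ^ 2)⁻¹ • ystar ∈ D ∧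
      ∀ y ∈ D, ‖(‖ystar‖ ^ 2)⁻¹ • ystar‖ ^ 2 ≤ ‖y‖ ^ 2) ∧
    (∀ y ∈ Ω, (∀ w ∈ Ω, ‖w‖ ^ 2 ≤ ‖y‖ ^ 2) → y = ystar) :=
  optimal_solutions_relation_general n m hm z D Ω hD hΩ ystar ybar hystar hystar0 hystarMax hybar
    hybarMin
end

section
/- The zero vector 0 maximizes ‖y‖² over y ∈ Ω if and only if the set D is empty. -/
/-!
The inversion `y ↦ y / ‖y‖²` in the unit sphere maps `D` bijectively onto `Ω \ {0}`: for `y ≠ 0`,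
`⟪z, y / ‖y‖²⟫ ≥ ‖y / ‖y‖²‖² = 1 / ‖y‖²` is equivalent to `⟪z, y⟫ ≥ 1`, and `⟪z, y / ‖y‖²⟫ ≥ 1` to
`⟪z, y⟫ ≥ ‖y‖²`. Hence `Ω = {0}` exactly when `D` is empty.
-/

open RealInnerProductSpace

section Inversion

variable {E : Type*} [NormedAddCommGroup E] [InnerProductSpace ℝ E]

theorem norm_sq_inv_norm_sq_smul (y : E) : ‖(‖y‖ ^ 2)⁻¹ • y‖ ^ 2 = (‖y‖ ^ 2)⁻¹ := by
  rcases eq_or_ne y 0 with rfl | hy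
  · simp
  · have hpos : 0 < ‖y‖ ^ 2 := by positivity
    rw [norm_smul, Real.norm_of_nonneg (inv_nonneg.2 hpos.le), mul_pow, sq (‖y‖ ^ 2)⁻¹,
      mul_assoc, inv_mul_cancel₀ hpos.ne', mul_one]

theorem norm_sq_le_inner_inv_norm_sq_smul_iff {y : E} (hy : y ≠ 0) (z : E) :
    ‖(‖y‖ ^ 2)⁻¹ • y‖ ^ 2 ≤ ⟪z, (‖y‖ ^ 2)⁻¹ • y⟫ ↔ 1 ≤ ⟪z, y⟫ := by
  rw [norm_sq_inv_norm_sq_smul, real_inner_smul_right]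
  exact le_mul_iff_one_le_right (by positivity)

theorem one_le_inner_inv_norm_sq_smul_iff {y : E} (hy : y ≠ 0) (z : E) :
    1 ≤ ⟪z, (‖y‖ ^ 2)⁻¹ • y⟫ ↔ ‖y‖ ^ 2 ≤ ⟪z, y⟫ := by
  rw [real_inner_smul_right, inv_mul_eq_div, one_le_div (by positivity)]

end Inversion

theorem zero_maximizes_iff_D_empty_general
    (n m : ℕ) (hm : 0 < m)
    (z : Fin m → EuclideanSpace ℝ (Fin n))
    (D Ω : Set (EuclideanSpace ℝ (Fin n)))
    (hD : D = {y | ∀ i : Fin m, 1 ≤ ⟪z i, y⟫})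
    (hΩ : Ω = {y | ∀ i : Fin m, ‖y‖ ^ 2 ≤ ⟪z i, y⟫}) :
    ((0 : EuclideanSpace ℝ (Fin n)) ∈ Ω ∧
      ∀ y ∈ Ω, ‖y‖ ^ 2 ≤ ‖(0 : EuclideanSpace ℝ (Fin n))‖ ^ 2) ↔ D = ∅ := by
  subst hD hΩ
  simp only [norm_zero, Set.mem_ofPred_eq, inner_zero_right]
  constructor
  · rintro ⟨-, hmax⟩
    refine Set.eq_empty_iff_forall_notMem.2 fun y hy => ?_
    have hy0 : y ≠ 0 := by
      rintro rfl
      have h := hy ⟨0, hm⟩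
      norm_num at h
    have h := hmax _ fun i => (norm_sq_le_inner_inv_norm_sq_smul_iff hy0 (z i)).2 (hy i)
    rw [norm_sq_inv_norm_sq_smul] at h
    have : 0 < (‖y‖ ^ 2)⁻¹ := by positivity
    linarith
  · intro hDe
    refine ⟨fun _ => by norm_num, fun y hy => ?_⟩
    by_contra hpos
    have hy0 : y ≠ 0 := by
      rintro rfl
      simp at hpos
    have hmem : (‖y‖ ^ 2)⁻¹ • y ∈ {y | ∀ i : Fin m, 1 ≤ ⟪z i, y⟫} :=
      fun i => (one_le_inner_inv_norm_sq_smul_iff hy0 (z i)).2 (hy i)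
    simp [hDe] at hmem

/-- The zero vector maximizes `‖y‖²` over `Ω` iff `D` is empty. -/
theorem zero_maximizes_iff_D_empty
    (n m : ℕ) (hn : 0 < n) (hm : 0 < m)
    (z : Fin m → EuclideanSpace ℝ (Fin n))
    (D Ω : Set (EuclideanSpace ℝ (Fin n)))
    (hD : D = {y | ∀ i : Fin m, 1 ≤ ⟪z i, y⟫})
    (hΩ : Ω = {y | ∀ i : Fin m, ‖y‖ ^ 2 ≤ ⟪z i, y⟫}) :
    ((0 : EuclideanSpace ℝ (Fin n)) ∈ Ω ∧
      ∀ y ∈ Ω, ‖y‖ ^ 2 ≤ ‖(0 : EuclideanSpace ℝ (Fin n))‖ ^ 2) ↔ D = ∅ :=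
  zero_maximizes_iff_D_empty_general n m hm z D Ω hD hΩ
end

section
/- If y* maximizes ‖y‖² over y ∈ Ω, then y* = ρ, where ρ is the point of L of minimal Euclidean norm (the projection of the origin onto L). -/
/-!
The minimal-norm point `ρ` of the convex hull `L` satisfies the variational inequality
`⟪ρ, w - ρ⟫ ≥ 0` on `L`; applied to `w = z i` it says `ρ ∈ Ω`, so `‖ρ‖² ≤ ‖y*‖²`.
Conversely every `y ∈ Ω` satisfies `‖y‖² ≤ ⟪w, y⟫` on all of `L`, since this is a half-space
containing the `z i`; at `w = ρ` this gives `‖y*‖² ≤ ⟪ρ, y*⟫`.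
Together, `‖y* - ρ‖² = ‖y*‖² - 2⟪ρ, y*⟫ + ‖ρ‖² ≤ 0`.
-/

open RealInnerProductSpace

variable {F : Type*} [NormedAddCommGroup F] [InnerProductSpace ℝ F]

theorem Convex.inner_sub_nonneg_of_isMinOn_norm {K : Set F} (hK : Convex ℝ K) {ρ : F}
    (hρ : ρ ∈ K) (hρMin : IsMinOn (‖·‖) K ρ) {w : F} (hw : w ∈ K) : 0 ≤ ⟪ρ, w - ρ⟫ := by
  have : Nonempty K := ⟨⟨ρ, hρ⟩⟩
  have hρ_eq_iInf : ‖0 - ρ‖ = ⨅ w : K, ‖0 - (w : F)‖ := by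
    simp only [zero_sub, norm_neg]
    exact le_antisymm (le_ciInf fun w ↦ isMinOn_iff.1 hρMin w w.2)
      (ciInf_le (f := fun w : K ↦ ‖(w : F)‖) ⟨0, Set.forall_mem_range.2 fun _ ↦ norm_nonneg _⟩
        ⟨ρ, hρ⟩)
  have := (norm_eq_iInf_iff_real_inner_le_zero hK hρ).1 hρ_eq_iInf w hw
  rwa [zero_sub, inner_neg_left, neg_nonpos] at this

theorem norm_sq_le_inner_of_isMinOn_norm_convexHull {ι : Type*} {z : ι → F} {ρ : F}
    (hρ : ρ ∈ convexHull ℝ (Set.range z)) (hρMin : IsMinOn (‖·‖) (convexHull ℝ (Set.range z)) ρ)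
    (i : ι) : ‖ρ‖ ^ 2 ≤ ⟪z i, ρ⟫ := by
  have := (convex_convexHull ℝ _).inner_sub_nonneg_of_isMinOn_norm hρ hρMin
    (subset_convexHull ℝ _ (Set.mem_range_self i))
  rw [inner_sub_right, real_inner_self_eq_norm_sq, real_inner_comm] at this
  linarith

theorem norm_sq_le_inner_of_mem_convexHull {ι : Type*} {z : ι → F} {y : F}
    (hy : ∀ i, ‖y‖ ^ 2 ≤ ⟪z i, y⟫) {w : F} (hw : w ∈ convexHull ℝ (Set.range z)) :
    ‖y‖ ^ 2 ≤ ⟪w, y⟫ := by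
  have hconv : Convex ℝ {w : F | ‖y‖ ^ 2 ≤ ⟪w, y⟫} := by
    simpa only [innerₛₗ_apply_apply, real_inner_comm y] using
      convex_halfSpace_ge (innerₛₗ ℝ y).isLinear (‖y‖ ^ 2)
  refine convexHull_min ?_ hconv hw
  rintro _ ⟨i, rfl⟩
  exact hy i

theorem eq_of_norm_sq_le_of_norm_sq_le_inner {x y : F} (hxy : ‖x‖ ^ 2 ≤ ‖y‖ ^ 2)
    (hyx : ‖y‖ ^ 2 ≤ ⟪x, y⟫) : y = x := by
  have : ‖y - x‖ ^ 2 ≤ 0 := by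
    rw [norm_sub_sq_real, real_inner_comm]
    linarith
  rw [← sub_eq_zero, ← norm_eq_zero]
  exact pow_eq_zero_iff two_ne_zero |>.1 (le_antisymm this (sq_nonneg _))

theorem maximizer_over_Omega_is_projection_general
    (n m : ℕ)
    (z : Fin m → EuclideanSpace ℝ (Fin n))
    (Ω : Set (EuclideanSpace ℝ (Fin n)))
    (hΩ : Ω = {y | ∀ i : Fin m, ‖y‖ ^ 2 ≤ ⟪z i, y⟫})
    (ystar : EuclideanSpace ℝ (Fin n))
    (hystar : ystar ∈ Ω)
    (hystarMax : ∀ y ∈ Ω, ‖y‖ ^ 2 ≤ ‖ystar‖ ^ 2)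
    (ρ : EuclideanSpace ℝ (Fin n))
    (hρ : ρ ∈ convexHull ℝ (Set.range z))
    (hρMin : ∀ w ∈ convexHull ℝ (Set.range z), ‖ρ‖ ≤ ‖w‖) :
    ystar = ρ := by
  subst hΩ
  have hρΩ : ∀ i, ‖ρ‖ ^ 2 ≤ ⟪z i, ρ⟫ :=
    norm_sq_le_inner_of_isMinOn_norm_convexHull hρ (isMinOn_iff.2 hρMin)
  exact eq_of_norm_sq_le_of_norm_sq_le_inner (hystarMax ρ hρΩ)
    (norm_sq_le_inner_of_mem_convexHull hystar hρ)

/-- If `y*` maximizes `‖y‖²` over `Ω`, then `y* = ρ`, the point of `L` of minimal norm. -/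
theorem maximizer_over_Omega_is_projection
    (n m : ℕ) (hn : 0 < n) (hm : 0 < m)
    (z : Fin m → EuclideanSpace ℝ (Fin n))
    (Ω : Set (EuclideanSpace ℝ (Fin n)))
    (hΩ : Ω = {y | ∀ i : Fin m, ‖y‖ ^ 2 ≤ ⟪z i, y⟫})
    (ystar : EuclideanSpace ℝ (Fin n))
    (hystar : ystar ∈ Ω)
    (hystarMax : ∀ y ∈ Ω, ‖y‖ ^ 2 ≤ ‖ystar‖ ^ 2)
    (ρ : EuclideanSpace ℝ (Fin n))
    (hρ : ρ ∈ convexHull ℝ (Set.range z))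
    (hρMin : ∀ w ∈ convexHull ℝ (Set.range z), ‖ρ‖ ≤ ‖w‖) :
    ystar = ρ :=
  maximizer_over_Omega_is_projection_general n m z Ω hΩ ystar hystar hystarMax ρ hρ hρMin
end

section
/- The zero vector 0 maximizes ‖y‖² over y ∈ Ω if and only if 0 ∈ L. -/
/-!
If `0 ∈ conv{z_i}`, averaging the constraints `‖y‖² ≤ ⟪z_i, y⟫` with the weights expressing `0`
gives `‖y‖² ≤ 0`. Conversely, if `0 ∉ L`, the point `v` of `L` nearest to `0` satisfies
`⟪w - v, v⟫ ≥ 0` for all `w ∈ L`, i.e. `‖v‖² ≤ ⟪w, v⟫`; so `v ≠ 0` lies in `Ω`.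
-/

open RealInnerProductSpace

variable {E : Type*} [NormedAddCommGroup E] [InnerProductSpace ℝ E]

theorem sq_norm_le_inner_of_mem_convexHull {s : Set E} {y w : E}
    (hy : ∀ x ∈ s, ‖y‖ ^ 2 ≤ ⟪x, y⟫) (hw : w ∈ convexHull ℝ s) : ‖y‖ ^ 2 ≤ ⟪w, y⟫ := by
  have hconvex : Convex ℝ {x : E | ‖y‖ ^ 2 ≤ ⟪x, y⟫} :=
    convex_halfSpace_ge ⟨fun a b => inner_add_left a b y, fun c a => real_inner_smul_left a y c⟩ _
  exact convexHull_min hy hconvex hw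

theorem exists_mem_forall_sq_norm_le_inner {K : Set E} (hne : K.Nonempty)
    (hcomplete : IsComplete K) (hconvex : Convex ℝ K) : ∃ v ∈ K, ∀ w ∈ K, ‖v‖ ^ 2 ≤ ⟪w, v⟫ := by
  obtain ⟨v, hvK, hmin⟩ := exists_norm_eq_iInf_of_complete_convex hne hcomplete hconvex 0
  refine ⟨v, hvK, fun w hw => ?_⟩
  have hobtuse : ⟪0 - v, w - v⟫ ≤ 0 :=
    (norm_eq_iInf_iff_real_inner_le_zero hconvex hvK).1 hmin w hw
  rw [zero_sub, inner_neg_left, inner_sub_right, real_inner_self_eq_norm_sq,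
    real_inner_comm] at hobtuse
  linarith

theorem zero_mem_convexHull_iff_forall_sq_norm_le_inner_imp_eq_zero {s : Set E} (hs : s.Finite)
    (hne : s.Nonempty) :
    (0 : E) ∈ convexHull ℝ s ↔ ∀ y : E, (∀ x ∈ s, ‖y‖ ^ 2 ≤ ⟪x, y⟫) → y = 0 := by
  constructor
  · intro h0 y hy
    have := sq_norm_le_inner_of_mem_convexHull hy h0
    rwa [inner_zero_left, sq_nonpos_iff, norm_eq_zero] at this
  · intro hzero
    obtain ⟨v, hvL, hv⟩ := exists_mem_forall_sq_norm_le_inner (hne.convexHull (𝕜 := ℝ))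
      (hs.isCompact_convexHull ℝ).isComplete (convex_convexHull ℝ s)
    have hv0 : v = 0 := hzero v fun x hx => hv x (subset_convexHull ℝ s hx)
    exact hv0 ▸ hvL

theorem zero_maximizes_iff_zero_mem_L_general
    (n m : ℕ) (hm : 0 < m)
    (z : Fin m → EuclideanSpace ℝ (Fin n))
    (Ω : Set (EuclideanSpace ℝ (Fin n)))
    (hΩ : Ω = {y | ∀ i : Fin m, ‖y‖ ^ 2 ≤ ⟪z i, y⟫}) :
    ((0 : EuclideanSpace ℝ (Fin n)) ∈ Ω ∧
      ∀ y ∈ Ω, ‖y‖ ^ 2 ≤ ‖(0 : EuclideanSpace ℝ (Fin n))‖ ^ 2) ↔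
      (0 : EuclideanSpace ℝ (Fin n)) ∈ convexHull ℝ (Set.range z) := by
  subst hΩ
  rw [zero_mem_convexHull_iff_forall_sq_norm_le_inner_imp_eq_zero (Set.finite_range z)
    (Set.range_nonempty_iff_nonempty.2 ⟨⟨0, hm⟩⟩)]
  simp

/-- The zero vector maximizes `‖y‖²` over `Ω` iff `0 ∈ L = conv{z_1, …, z_m}`. -/
theorem zero_maximizes_iff_zero_mem_L
    (n m : ℕ) (hn : 0 < n) (hm : 0 < m)
    (z : Fin m → EuclideanSpace ℝ (Fin n))
    (Ω : Set (EuclideanSpace ℝ (Fin n)))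
    (hΩ : Ω = {y | ∀ i : Fin m, ‖y‖ ^ 2 ≤ ⟪z i, y⟫}) :
    ((0 : EuclideanSpace ℝ (Fin n)) ∈ Ω ∧
      ∀ y ∈ Ω, ‖y‖ ^ 2 ≤ ‖(0 : EuclideanSpace ℝ (Fin n))‖ ^ 2) ↔
      (0 : EuclideanSpace ℝ (Fin n)) ∈ convexHull ℝ (Set.range z) :=
  zero_maximizes_iff_zero_mem_L_general n m hm z Ω hΩ
end

section
/- The set D = {y ∈ ℝⁿ : ⟪z_i, y⟫ ≥ 1 for all i = 1, …, m} is empty if and only if the origin 0 belongs to L. -/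
/-!
If every `z i` satisfies `1 ≤ ⟪z i, y⟫`, so does every convex combination of them, while the
origin does not. Conversely, if `0 ∉ L`, Hahn–Banach strictly separates the origin from the
compact convex set `L` by a functional `⟪y, ·⟫` with `0 < u < ⟪y, x⟫` on `L`, and `u⁻¹ • y`
lies in `D`.
-/

open RealInnerProductSpace

variable {E : Type*} [NormedAddCommGroup E] [InnerProductSpace ℝ E]

theorem convexHull_subset_setOf_one_le_inner {s : Set E} {y : E} (hs : ∀ x ∈ s, 1 ≤ ⟪x, y⟫) :
    convexHull ℝ s ⊆ {x | 1 ≤ ⟪x, y⟫} :=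
  convexHull_min hs <| convex_halfSpace_ge (innerₛₗ ℝ |>.flip y).isLinear 1

theorem zero_notMem_convexHull_of_one_le_inner {s : Set E} {y : E} (hs : ∀ x ∈ s, 1 ≤ ⟪x, y⟫) :
    (0 : E) ∉ convexHull ℝ s := fun h0 =>
  absurd (convexHull_subset_setOf_one_le_inner hs h0) (by simp)

theorem exists_one_le_inner_of_zero_notMem_convexHull [CompleteSpace E] {s : Set E}
    (hclosed : IsClosed (convexHull ℝ s)) (h0 : (0 : E) ∉ convexHull ℝ s) :
    ∃ y : E, ∀ x ∈ s, 1 ≤ ⟪x, y⟫ := by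
  obtain ⟨f, u, hf0, hfs⟩ :=
    geometric_hahn_banach_point_closed (convex_convexHull ℝ s) hclosed h0
  have hu : 0 < u := by simpa using hf0
  refine ⟨u⁻¹ • (InnerProductSpace.toDual ℝ E).symm f, fun x hx => ?_⟩
  have hfx : u < f x := hfs x (subset_convexHull ℝ s hx)
  calc 1 = u⁻¹ * u := (inv_mul_cancel₀ hu.ne').symm
    _ ≤ u⁻¹ * f x := by gcongr
    _ = ⟪x, u⁻¹ • (InnerProductSpace.toDual ℝ E).symm f⟫ := by
      rw [real_inner_smul_right, real_inner_comm, InnerProductSpace.toDual_symm_apply]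

theorem D_empty_iff_zero_mem_L_general
    (n m : ℕ)
    (z : Fin m → EuclideanSpace ℝ (Fin n)) :
    {y : EuclideanSpace ℝ (Fin n) | ∀ i : Fin m, 1 ≤ ⟪z i, y⟫} = ∅ ↔
      (0 : EuclideanSpace ℝ (Fin n)) ∈ convexHull ℝ (Set.range z) := by
  rw [Set.eq_empty_iff_forall_notMem]
  constructor
  · intro hD
    by_contra h0
    obtain ⟨y, hy⟩ := exists_one_le_inner_of_zero_notMem_convexHull
      ((Set.finite_range z).isClosed_convexHull ℝ) h0
    exact hD y fun i => hy (z i) (Set.mem_range_self i)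
  · rintro h0 y hy
    exact zero_notMem_convexHull_of_one_le_inner (Set.forall_mem_range.2 hy) h0

/-- `D = {y | ⟪z i, y⟫ ≥ 1 ∀ i}` is empty iff the origin belongs to `L = conv{z_1, …, z_m}`. -/
theorem D_empty_iff_zero_mem_L
    (n m : ℕ) (hn : 0 < n) (hm : 0 < m)
    (z : Fin m → EuclideanSpace ℝ (Fin n)) :
    {y : EuclideanSpace ℝ (Fin n) | ∀ i : Fin m, 1 ≤ ⟪z i, y⟫} = ∅ ↔
      (0 : EuclideanSpace ℝ (Fin n)) ∈ convexHull ℝ (Set.range z) :=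
  D_empty_iff_zero_mem_L_general n m z
end

section
/- A vector y* ∈ D minimizes ‖y‖² over y ∈ D if and only if there exists a vector u* ∈ ℝᵐ with u* ≥ 0 (componentwise) such that 2·y* = Σ_{i=1}^m u*_i · z_i and Σ_{i=1}^m u*_i · (⟪z_i, y*⟫ − 1) = 0 (complementary slackness). -/
/-!
If `u` satisfies the KKT conditions, then for feasible `y` complementary slackness gives
`2⟪y*, y - y*⟫ = ∑ uᵢ (⟪zᵢ, y⟫ - 1) ≥ 0`, hence `‖y‖² ≥ ‖y*‖²`.
Conversely, at a minimizer every direction `d` with `⟪zᵢ, d⟫ ≥ 0` on the active constraints is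
feasible for small steps, so first-order optimality gives `⟪y*, d⟫ ≥ 0`. By Farkas' lemma `y*`
then lies in the cone spanned by the active `zᵢ`; this cone is closed because, by the conic
Carathéodory theorem, it is a finite union of cones over linearly independent families. Twice its
coefficients, extended by zero, are the multipliers.
-/

open RealInnerProductSpace

open Filter Topology

theorem Finset.exists_nonneg_sub_mul_eq_zero {𝕜 ι : Type*} [Field 𝕜] [LinearOrder 𝕜]
    [IsStrictOrderedRing 𝕜] {s : Finset ι} {c f : ι → 𝕜} (hc : ∀ i ∈ s, 0 ≤ c i)
    (hf : ∃ i ∈ s, f i ≠ 0) :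
    ∃ τ : 𝕜, (∀ i ∈ s, 0 ≤ c i - τ * f i) ∧ ∃ j ∈ s, c j - τ * f j = 0 := by
  suffices key : ∀ g : ι → 𝕜, (∃ i ∈ s, 0 < g i) →
      ∃ τ : 𝕜, (∀ i ∈ s, 0 ≤ c i - τ * g i) ∧ ∃ j ∈ s, c j - τ * g j = 0 by
    obtain ⟨i, hi, hfi⟩ := hf
    rcases hfi.lt_or_gt with hneg | hpos
    · obtain ⟨τ, hτ, j, hj, hcj⟩ := key (-f) ⟨i, hi, neg_pos.mpr hneg⟩
      exact ⟨-τ, fun i hi => by simpa using hτ i hi, j, hj, by simpa using hcj⟩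
    · exact key f ⟨i, hi, hpos⟩
  intro g ⟨i, hi, hgi⟩
  classical
  -- the largest step keeping `c - τ g` nonnegative is the least ratio `c i / g i` with `0 < g i`
  obtain ⟨j, hj, hmin⟩ := (s.filter (0 < g ·)).exists_min_image (fun i => c i / g i)
    ⟨i, Finset.mem_filter.mpr ⟨hi, hgi⟩⟩
  obtain ⟨hjs, hgj⟩ := Finset.mem_filter.mp hj
  refine ⟨c j / g j, fun k hk => ?_, j, hjs, by field_simp; ring⟩
  rcases le_or_gt (g k) 0 with hgk | hgk
  · have : 0 ≤ c j / g j := div_nonneg (hc j hjs) hgj.le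
    nlinarith [hc k hk]
  · have := hmin k (Finset.mem_filter.mpr ⟨hk, hgk⟩)
    rw [div_le_div_iff₀ hgj hgk] at this
    rw [div_mul_eq_mul_div, sub_nonneg, div_le_iff₀ hgj]
    linarith

namespace PointedCone

section Field

variable {𝕜 E ι : Type*} [Field 𝕜] [LinearOrder 𝕜] [IsStrictOrderedRing 𝕜]
  [AddCommGroup E] [Module 𝕜 E]

theorem mem_hull_range_iff [Fintype ι] {v : ι → E} {x : E} :
    x ∈ hull 𝕜 (Set.range v) ↔ ∃ c : ι → 𝕜, (∀ i, 0 ≤ c i) ∧ ∑ i, c i • v i = x := by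
  rw [Submodule.mem_span_range_iff_exists_fun]
  constructor
  · rintro ⟨c, rfl⟩
    exact ⟨fun i => c i, fun i => (c i).2, by simp only [Nonneg.coe_smul]⟩
  · rintro ⟨c, hc, rfl⟩
    exact ⟨fun i => ⟨c i, hc i⟩, by simp only [Nonneg.mk_smul]⟩

theorem mem_hull_image_finset_iff {v : ι → E} {s : Finset ι} {x : E} :
    x ∈ hull 𝕜 (v '' s) ↔ ∃ c : ι → 𝕜, (∀ i ∈ s, 0 ≤ c i) ∧ ∑ i ∈ s, c i • v i = x := by
  classical
  rw [Set.image_eq_range, mem_hull_range_iff]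
  constructor
  · rintro ⟨c, hc, rfl⟩
    refine ⟨fun i => if h : i ∈ s then c ⟨i, h⟩ else 0, fun i hi => by simp [hi, hc], ?_⟩
    rw [← Finset.sum_coe_sort s]
    simp
  · rintro ⟨c, hc, rfl⟩
    exact ⟨fun i => c i, fun i => hc i i.2, Finset.sum_coe_sort s fun i => c i • v i⟩

theorem exists_linearIndepOn_subset_of_mem_hull_image {v : ι → E} {s : Finset ι} {x : E}
    (hx : x ∈ hull 𝕜 (v '' s)) :
    ∃ t ⊆ s, LinearIndepOn 𝕜 v (t : Set ι) ∧ x ∈ hull 𝕜 (v '' t) := by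
  classical
  induction s using Finset.strongInduction with
  | H s ih =>
  by_cases hs : LinearIndepOn 𝕜 v (s : Set ι)
  · exact ⟨s, subset_rfl, hs, hx⟩
  obtain ⟨f, hf, hf0⟩ := not_linearIndepOn_finset_iff.mp hs
  obtain ⟨c, hc, rfl⟩ := mem_hull_image_finset_iff.mp hx
  obtain ⟨τ, hτ, j, hj, hcj⟩ := Finset.exists_nonneg_sub_mul_eq_zero hc hf0
  -- moving along the linear relation `f` kills the coefficient of `v j`
  have hsum : ∑ i ∈ s.erase j, (c i - τ * f i) • v i = ∑ i ∈ s, c i • v i := by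
    rw [Finset.sum_erase _ (by rw [hcj, zero_smul])]
    simp only [sub_smul, mul_smul, Finset.sum_sub_distrib, ← Finset.smul_sum, hf, smul_zero,
      sub_zero]
  obtain ⟨t, hts, ht, hxt⟩ := ih (s.erase j) (Finset.erase_ssubset hj)
    (mem_hull_image_finset_iff.mpr ⟨_, fun i hi => hτ i (Finset.mem_of_mem_erase hi), hsum⟩)
  exact ⟨t, hts.trans (Finset.erase_subset j s), ht, hxt⟩

end Field

section Normed

variable {E ι : Type*} [NormedAddCommGroup E] [NormedSpace ℝ E]

theorem isClosed_hull_range_of_linearIndependent [Finite ι] {v : ι → E}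
    (hv : LinearIndependent ℝ v) : IsClosed (hull ℝ (Set.range v) : Set E) := by
  have := Fintype.ofFinite ι
  have himage : (hull ℝ (Set.range v) : Set E) = Fintype.linearCombination ℝ v '' Set.Ici 0 := by
    ext x
    simp only [SetLike.mem_coe, mem_hull_range_iff, Set.mem_image, Set.mem_Ici,
      Fintype.linearCombination_apply, Pi.le_def, Pi.zero_apply]
  rw [himage]
  refine (LinearMap.isClosedEmbedding_of_injective ?_).isClosedMap _ isClosed_Ici
  exact LinearMap.ker_eq_bot.mpr (linearIndependent_iff_injective_fintypeLinearCombination.mp hv)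

theorem isClosed_hull_image_finset (v : ι → E) (s : Finset ι) :
    IsClosed (hull ℝ (v '' s) : Set E) := by
  classical
  have hunion : (hull ℝ (v '' s) : Set E) =
      ⋃ (t : Finset ι) (_ : t ∈ s.powerset.filter fun t : Finset ι =>
        LinearIndepOn ℝ v (t : Set ι)), (hull ℝ (v '' t) : Set E) := by
    ext x
    simp only [SetLike.mem_coe, Set.mem_iUnion, Finset.mem_filter, Finset.mem_powerset,
      exists_prop]
    constructor
    · intro hx
      obtain ⟨t, hts, ht, hxt⟩ := exists_linearIndepOn_subset_of_mem_hull_image hx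
      exact ⟨t, ⟨hts, ht⟩, hxt⟩
    · rintro ⟨t, ⟨hts, -⟩, hxt⟩
      exact Submodule.span_mono (Set.image_mono (Finset.coe_subset.mpr hts)) hxt
  rw [hunion]
  refine isClosed_biUnion_finset fun t ht => ?_
  rw [Set.image_eq_range]
  exact isClosed_hull_range_of_linearIndependent (Finset.mem_filter.mp ht).2

end Normed

theorem mem_hull_image_of_forall_inner_nonneg {E ι : Type*} [NormedAddCommGroup E]
    [InnerProductSpace ℝ E] [FiniteDimensional ℝ E] (v : ι → E) (s : Finset ι) {x : E}
    (h : ∀ d, (∀ i ∈ s, 0 ≤ ⟪v i, d⟫) → 0 ≤ ⟪x, d⟫) : x ∈ hull ℝ (v '' s) := by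
  by_contra hx
  let C : ProperCone ℝ E := ⟨hull ℝ (v '' s), isClosed_hull_image_finset v s⟩
  obtain ⟨d, hd, hxd⟩ := C.hyperplane_separation' hx
  exact hxd.not_ge (h d fun i hi => hd (v i) (subset_hull ⟨i, hi, rfl⟩))

end PointedCone

section Polyhedron

variable {E ι : Type*} [NormedAddCommGroup E] [InnerProductSpace ℝ E]

theorem inner_nonneg_of_isMinOn_norm_sq {s : Set E} {x d : E}
    (hmin : IsMinOn (fun y => ‖y‖ ^ 2) s x) (hd : d ∈ posTangentConeAt s x) : 0 ≤ ⟪x, d⟫ := by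
  have := hmin.localize.hasFDerivWithinAt_nonneg
    (hasStrictFDerivAt_norm_sq x).hasFDerivAt.hasFDerivWithinAt hd
  simpa using this

theorem norm_sq_le_norm_sq_of_inner_sub_nonneg {x y : E} (h : 0 ≤ ⟪x, y - x⟫) :
    ‖x‖ ^ 2 ≤ ‖y‖ ^ 2 := by
  have := norm_add_sq_real x (y - x)
  rw [add_sub_cancel] at this
  nlinarith [sq_nonneg ‖y - x‖]

theorem eventually_forall_le_inner_add_smul [Finite ι] {z : ι → E} {b : ι → ℝ} {x d : E}
    (hx : ∀ i, b i ≤ ⟪z i, x⟫) (hd : ∀ i, ⟪z i, x⟫ = b i → 0 ≤ ⟪z i, d⟫) :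
    ∀ᶠ t in 𝓝[>] (0 : ℝ), ∀ i, b i ≤ ⟪z i, x + t • d⟫ := by
  rw [eventually_all]
  intro i
  simp only [inner_add_right, real_inner_smul_right]
  rcases (hx i).eq_or_lt with hact | hslack
  · filter_upwards [self_mem_nhdsWithin] with t (ht : 0 < t)
    nlinarith [hd i hact.symm]
  · have hcont : Continuous fun t : ℝ => ⟪z i, x⟫ + t * ⟪z i, d⟫ := by fun_prop
    have := (hcont.tendsto' 0 _ (by simp)).eventually (lt_mem_nhds hslack)
    exact (this.filter_mono nhdsWithin_le_nhds).mono fun t ht => ht.le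

theorem norm_sq_le_of_kkt [Fintype ι] {z : ι → E} {b u : ι → ℝ} {x y : E}
    (hu : ∀ i, 0 ≤ u i) (hstat : (2 : ℝ) • x = ∑ i, u i • z i)
    (hslack : ∑ i, u i * (⟪z i, x⟫ - b i) = 0) (hy : ∀ i, b i ≤ ⟪z i, y⟫) :
    ‖x‖ ^ 2 ≤ ‖y‖ ^ 2 := by
  refine norm_sq_le_norm_sq_of_inner_sub_nonneg ?_
  have hgap : 2 * ⟪x, y - x⟫ = ∑ i, u i * (⟪z i, y⟫ - b i) - ∑ i, u i * (⟪z i, x⟫ - b i) := by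
    rw [← real_inner_smul_left, hstat, sum_inner, ← Finset.sum_sub_distrib]
    refine Finset.sum_congr rfl fun i _ => ?_
    rw [real_inner_smul_left, inner_sub_right]
    ring
  have : 0 ≤ ∑ i, u i * (⟪z i, y⟫ - b i) :=
    Finset.sum_nonneg fun i _ => mul_nonneg (hu i) (sub_nonneg.mpr (hy i))
  linarith

theorem exists_kkt_of_isMinOn [FiniteDimensional ℝ E] [Fintype ι] {z : ι → E} {b : ι → ℝ}
    {x : E} (hx : ∀ i, b i ≤ ⟪z i, x⟫)
    (hmin : IsMinOn (fun y => ‖y‖ ^ 2) {y | ∀ i, b i ≤ ⟪z i, y⟫} x) :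
    ∃ u : ι → ℝ, (∀ i, 0 ≤ u i) ∧ (2 : ℝ) • x = ∑ i, u i • z i ∧
      ∑ i, u i * (⟪z i, x⟫ - b i) = 0 := by
  classical
  set active := Finset.univ.filter fun i => ⟪z i, x⟫ = b i
  have hcone : x ∈ PointedCone.hull ℝ (z '' active) :=
    PointedCone.mem_hull_image_of_forall_inner_nonneg z active fun d hd =>
      inner_nonneg_of_isMinOn_norm_sq hmin <| mem_posTangentConeAt_of_frequently_mem
        (eventually_forall_le_inner_add_smul hx fun i hi =>
          hd i (Finset.mem_filter.mpr ⟨Finset.mem_univ i, hi⟩)).frequently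
  obtain ⟨c, hc, hxc⟩ := PointedCone.mem_hull_image_finset_iff.mp hcone
  refine ⟨fun i => if ⟪z i, x⟫ = b i then 2 * c i else 0, fun i => ?_, ?_, ?_⟩
  · dsimp only
    split_ifs with hi
    · linarith [hc i (Finset.mem_filter.mpr ⟨Finset.mem_univ i, hi⟩)]
    · rfl
  · conv_lhs => rw [← hxc, Finset.sum_filter, Finset.smul_sum]
    refine Finset.sum_congr rfl fun i _ => ?_
    dsimp only
    split_ifs
    · rw [mul_smul]
    · rw [smul_zero, zero_smul]
  · refine Finset.sum_eq_zero fun i _ => ?_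
    dsimp only
    split_ifs with hi <;> simp [hi]

end Polyhedron

theorem min_norm_over_D_iff_KKT_general
    (n m : ℕ)
    (z : Fin m → EuclideanSpace ℝ (Fin n))
    (D : Set (EuclideanSpace ℝ (Fin n)))
    (hD : D = {y | ∀ i : Fin m, 1 ≤ ⟪z i, y⟫})
    (ystar : EuclideanSpace ℝ (Fin n))
    (hystar : ystar ∈ D) :
    (∀ y ∈ D, ‖ystar‖ ^ 2 ≤ ‖y‖ ^ 2) ↔
      ∃ u : Fin m → ℝ, (∀ i, 0 ≤ u i) ∧
        (2 : ℝ) • ystar = ∑ i, u i • z i ∧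
        ∑ i, u i * (⟪z i, ystar⟫ - 1) = 0 := by
  subst hD
  exact ⟨fun hmin => exists_kkt_of_isMinOn hystar hmin,
    fun ⟨_, hu, hstat, hslack⟩ y hy => norm_sq_le_of_kkt hu hstat hslack hy⟩

/-- KKT conditions: `y* ∈ D` minimizes `‖y‖²` over `D` iff there is `u* ≥ 0` with
`2 y* = Σ u*_i z_i` and `Σ u*_i (⟪z_i, y*⟫ - 1) = 0`. -/
theorem min_norm_over_D_iff_KKT
    (n m : ℕ) (hn : 0 < n) (hm : 0 < m)
    (z : Fin m → EuclideanSpace ℝ (Fin n))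
    (D : Set (EuclideanSpace ℝ (Fin n)))
    (hD : D = {y | ∀ i : Fin m, 1 ≤ ⟪z i, y⟫})
    (ystar : EuclideanSpace ℝ (Fin n))
    (hystar : ystar ∈ D) :
    (∀ y ∈ D, ‖ystar‖ ^ 2 ≤ ‖y‖ ^ 2) ↔
      ∃ u : Fin m → ℝ, (∀ i, 0 ≤ u i) ∧
        (2 : ℝ) • ystar = ∑ i, u i • z i ∧
        ∑ i, u i * (⟪z i, ystar⟫ - 1) = 0 :=
  min_norm_over_D_iff_KKT_general n m z D hD ystar hystar
end

section
/- The system of inequalities ⟪z_i, y⟫ ≥ 1 (i = 1, …, m) is inconsistent (i.e. D = ∅) if and only if the dual function f(u) = (1/4)·‖Σ_{i=1}^m u_i z_i‖² − Σ_{i=1}^m u_i is unbounded from below on the nonnegative orthant {u ∈ ℝᵐ : u ≥ 0}. -/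
open RealInnerProductSpace

/-!
If `y` is feasible, then for `u ≥ 0` we have `∑ uᵢ ≤ ⟪∑ uᵢ zᵢ, y⟫ ≤ ‖∑ uᵢ zᵢ‖ ‖y‖`, and AM-GM bounds
the dual objective below by `-‖y‖²`. If the system is infeasible, then `0` lies in the convex hull
of the `zᵢ`: otherwise a hyperplane strictly separating `0` from this compact convex set, rescaled,
yields a feasible `y`. A convex combination `∑ uᵢ zᵢ = 0` then gives `f(t • u) = -t` for all `t ≥ 0`.
-/

variable {ι E : Type*} [Fintype ι] [NormedAddCommGroup E] [InnerProductSpace ℝ E]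

noncomputable def dualObjective (z : ι → E) (u : ι → ℝ) : ℝ :=
  (1 / 4) * ‖∑ i, u i • z i‖ ^ 2 - ∑ i, u i

theorem neg_sq_norm_le_dualObjective {z : ι → E} {y : E} (hy : ∀ i, 1 ≤ ⟪z i, y⟫)
    {u : ι → ℝ} (hu : 0 ≤ u) : -‖y‖ ^ 2 ≤ dualObjective z u := by
  have hsum : ∑ i, u i ≤ ⟪∑ i, u i • z i, y⟫ := by
    rw [sum_inner]
    gcongr with i
    rw [real_inner_smul_left]
    exact le_mul_of_one_le_right (hu i) (hy i)
  have hcs := real_inner_le_norm (∑ i, u i • z i) y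
  unfold dualObjective
  nlinarith [sq_nonneg (‖∑ i, u i • z i‖ - 2 * ‖y‖)]

theorem dualObjective_smul_of_sum_smul_eq_zero {z : ι → E} {u : ι → ℝ}
    (hu : ∑ i, u i • z i = 0) (t : ℝ) : dualObjective z (t • u) = -(t * ∑ i, u i) := by
  simp only [dualObjective, Pi.smul_apply, smul_eq_mul, mul_smul, ← Finset.smul_sum, hu,
    smul_zero, norm_zero, ← Finset.mul_sum]
  ring

theorem exists_dualObjective_lt_of_sum_smul_eq_zero {z : ι → E} {u : ι → ℝ}
    (hu : u ∈ stdSimplex ℝ ι) (huz : ∑ i, u i • z i = 0) (M : ℝ) :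
    ∃ v, 0 ≤ v ∧ dualObjective z v < M := by
  refine ⟨(|M| + 1) • u, smul_nonneg (by positivity) hu.1, ?_⟩
  rw [dualObjective_smul_of_sum_smul_eq_zero huz, hu.2]
  linarith [neg_abs_le M]

theorem exists_forall_one_le_inner_of_sum_smul_ne_zero [CompleteSpace E] (z : ι → E)
    (h : ∀ u ∈ stdSimplex ℝ ι, ∑ i, u i • z i ≠ 0) : ∃ y, ∀ i, 1 ≤ ⟪z i, y⟫ := by
  classical
  let L := Fintype.linearCombination ℝ z
  have hK : IsCompact (L '' stdSimplex ℝ ι) :=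
    (isCompact_stdSimplex ℝ ι).image L.continuous_of_finiteDimensional
  have h0 : (0 : E) ∉ L '' stdSimplex ℝ ι := by
    rintro ⟨u, hu, hLu⟩
    exact h u hu (by rwa [Fintype.linearCombination_apply] at hLu)
  obtain ⟨f, c, hc0, hc⟩ :=
    geometric_hahn_banach_point_closed ((convex_stdSimplex ℝ ι).linear_image L) hK.isClosed h0
  rw [map_zero] at hc0
  refine ⟨c⁻¹ • (InnerProductSpace.toDual ℝ E).symm f, fun i => ?_⟩
  have hzi : c < f (z i) := hc _ ⟨Pi.single i 1, single_mem_stdSimplex ℝ i, by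
    simp [L, Fintype.linearCombination_apply_single]⟩
  rw [real_inner_smul_right, real_inner_comm, InnerProductSpace.toDual_symm_apply,
    inv_mul_eq_div, one_le_div hc0]
  exact hzi.le

theorem D_empty_iff_dual_unbounded_general
    (n m : ℕ)
    (z : Fin m → EuclideanSpace ℝ (Fin n)) :
    {y : EuclideanSpace ℝ (Fin n) | ∀ i : Fin m, 1 ≤ ⟪z i, y⟫} = ∅ ↔
      ¬ ∃ M : ℝ, ∀ u : Fin m → ℝ, (∀ i, 0 ≤ u i) →
        M ≤ (1 / 4) * ‖∑ i, u i • z i‖ ^ 2 - ∑ i, u i := by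
  rw [Set.eq_empty_iff_forall_notMem]
  constructor
  · rintro hD ⟨M, hM⟩
    by_cases h0 : ∃ u ∈ stdSimplex ℝ (Fin m), ∑ i, u i • z i = 0
    · obtain ⟨u, hu, huz⟩ := h0
      obtain ⟨v, hv, hlt⟩ := exists_dualObjective_lt_of_sum_smul_eq_zero hu huz M
      exact (hM v hv).not_gt hlt
    · push Not at h0
      obtain ⟨y, hy⟩ := exists_forall_one_le_inner_of_sum_smul_ne_zero z h0
      exact hD y hy
  · intro hU y hy
    exact hU ⟨-‖y‖ ^ 2, fun u hu => neg_sq_norm_le_dualObjective hy hu⟩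

/-- The system `⟪z i, y⟫ ≥ 1` (i = 1,…,m) is inconsistent iff the dual objective
`f(u) = (1/4)‖Σ u_i z_i‖² − Σ u_i` is unbounded from below on the nonnegative orthant. -/
theorem D_empty_iff_dual_unbounded
    (n m : ℕ) (hn : 0 < n) (hm : 0 < m)
    (z : Fin m → EuclideanSpace ℝ (Fin n)) :
    {y : EuclideanSpace ℝ (Fin n) | ∀ i : Fin m, 1 ≤ ⟪z i, y⟫} = ∅ ↔
      ¬ ∃ M : ℝ, ∀ u : Fin m → ℝ, (∀ i, 0 ≤ u i) →
        M ≤ (1 / 4) * ‖∑ i, u i • z i‖ ^ 2 - ∑ i, u i :=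
  D_empty_iff_dual_unbounded_general n m z
end

section
/- The function f(u) = (1/4)·‖Σ_{i=1}^m u_i z_i‖² − Σ_{i=1}^m u_i is unbounded from below on the nonnegative orthant {u ∈ ℝᵐ : u ≥ 0} if and only if the origin 0 belongs to L. -/
/-!
If `0 ∉ L`, then `L` is closed, so `‖x‖ ≥ δ > 0` on `L`. Writing `s = Σ uᵢ`, the point
`Σ uᵢ zᵢ` is `s` times a point of `L`, so `f(u) ≥ s²δ²/4 - s ≥ -1/δ²`. If `0 ∈ L`, then
`0 = Σ wᵢ zᵢ` with `w` a probability vector, and `f(t w) = -t` for every `t ≥ 0`.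
-/

open Finset Set

section Weights

variable {R E ι : Type*} [Field R] [LinearOrder R] [IsStrictOrderedRing R]
  [AddCommGroup E] [Module R E] [Fintype ι]

theorem exists_weights_of_mem_convexHull_range {z : ι → E} {x : E}
    (hx : x ∈ convexHull R (range z)) :
    ∃ w : ι → R, (∀ i, 0 ≤ w i) ∧ ∑ i, w i = 1 ∧ ∑ i, w i • z i = x := by
  classical
  rw [convexHull_range_eq_exists_affineCombination] at hx
  obtain ⟨s, w, hw₀, hw₁, rfl⟩ := hx
  refine ⟨fun i => if i ∈ s then w i else 0, fun i => ?_, ?_, ?_⟩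
  · dsimp only
    split_ifs with hi
    exacts [hw₀ i hi, le_rfl]
  · rw [Finset.sum_ite_mem, Finset.univ_inter, hw₁]
  · simp only [ite_smul, zero_smul]
    rw [Finset.sum_ite_mem, Finset.univ_inter,
      Finset.affineCombination_eq_linear_combination s z w hw₁]

end Weights

theorem exists_pos_le_norm_of_isClosed {E : Type*} [NormedAddCommGroup E] {s : Set E}
    (hs : IsClosed s) (h0 : (0 : E) ∉ s) :
    ∃ δ > 0, ∀ x ∈ s, δ ≤ ‖x‖ := by
  obtain ⟨δ, hδ, hball⟩ := Metric.mem_nhds_iff.1 (hs.isOpen_compl.mem_nhds h0)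
  refine ⟨δ, hδ, fun x hx => not_lt.1 fun hlt => hball ?_ hx⟩
  rwa [Metric.mem_ball, dist_zero_right]

section DualObjective

variable {E ι : Type*} [NormedAddCommGroup E] [NormedSpace ℝ E] [Fintype ι]

theorem sum_mul_le_norm_sum_smul {z : ι → E} {δ : ℝ}
    (hδ : ∀ x ∈ convexHull ℝ (range z), δ ≤ ‖x‖) {u : ι → ℝ} (hu : ∀ i, 0 ≤ u i) :
    (∑ i, u i) * δ ≤ ‖∑ i, u i • z i‖ := by
  rcases (Finset.sum_nonneg fun i _ => hu i).eq_or_lt with hs | hs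
  · rw [← hs, zero_mul]
    exact norm_nonneg _
  have hmem : univ.centerMass u z ∈ convexHull ℝ (range z) :=
    univ.centerMass_mem_convexHull (fun i _ => hu i) hs fun i _ => mem_range_self i
  calc (∑ i, u i) * δ ≤ (∑ i, u i) * ‖univ.centerMass u z‖ :=
        mul_le_mul_of_nonneg_left (hδ _ hmem) hs.le
    _ = ‖∑ i, u i • z i‖ := by
        rw [Finset.centerMass, norm_smul, Real.norm_of_nonneg (inv_nonneg.2 hs.le),
          ← mul_assoc, mul_inv_cancel₀ hs.ne', one_mul]

theorem neg_inv_sq_le_quarter_mul_sq_sub {δ : ℝ} (hδ : δ ≠ 0) (s : ℝ) :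
    -(δ ^ 2)⁻¹ ≤ 1 / 4 * (s * δ) ^ 2 - s := by
  have key : 1 / 4 * (s * δ) ^ 2 - s + (δ ^ 2)⁻¹ = (s * δ / 2 - δ⁻¹) ^ 2 := by
    field_simp
    ring
  linarith [sq_nonneg (s * δ / 2 - δ⁻¹)]

theorem exists_le_dual_of_zero_notMem_convexHull {z : ι → E}
    (h0 : (0 : E) ∉ convexHull ℝ (range z)) :
    ∃ M : ℝ, ∀ u : ι → ℝ, (∀ i, 0 ≤ u i) →
      M ≤ (1 / 4) * ‖∑ i, u i • z i‖ ^ 2 - ∑ i, u i := by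
  obtain ⟨δ, hδ, hle⟩ :=
    exists_pos_le_norm_of_isClosed ((finite_range z).isClosed_convexHull (𝕜 := ℝ)) h0
  refine ⟨-(δ ^ 2)⁻¹, fun u hu => ?_⟩
  have hnorm := sum_mul_le_norm_sum_smul hle hu
  have hsq : ((∑ i, u i) * δ) ^ 2 ≤ ‖∑ i, u i • z i‖ ^ 2 :=
    pow_le_pow_left₀ (mul_nonneg (Finset.sum_nonneg fun i _ => hu i) hδ.le) hnorm 2
  linarith [neg_inv_sq_le_quarter_mul_sq_sub hδ.ne' (∑ i, u i)]

theorem exists_dual_lt_of_zero_mem_convexHull {z : ι → E}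
    (h0 : (0 : E) ∈ convexHull ℝ (range z)) (M : ℝ) :
    ∃ u : ι → ℝ, (∀ i, 0 ≤ u i) ∧ (1 / 4) * ‖∑ i, u i • z i‖ ^ 2 - ∑ i, u i < M := by
  obtain ⟨w, hw₀, hw₁, hwz⟩ := exists_weights_of_mem_convexHull_range h0
  refine ⟨fun i => (|M| + 1) * w i, fun i => mul_nonneg (by positivity) (hw₀ i), ?_⟩
  simp only [mul_smul, ← Finset.smul_sum, ← Finset.mul_sum, hwz, hw₁, smul_zero, norm_zero]
  linarith [neg_abs_le M]

end DualObjective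

theorem dual_unbounded_iff_zero_mem_L_general
    (n m : ℕ)
    (z : Fin m → EuclideanSpace ℝ (Fin n)) :
    (¬ ∃ M : ℝ, ∀ u : Fin m → ℝ, (∀ i, 0 ≤ u i) →
        M ≤ (1 / 4) * ‖∑ i, u i • z i‖ ^ 2 - ∑ i, u i) ↔
      (0 : EuclideanSpace ℝ (Fin n)) ∈ convexHull ℝ (Set.range z) := by
  refine ⟨not_imp_comm.1 exists_le_dual_of_zero_notMem_convexHull, fun h0 ⟨M, hM⟩ => ?_⟩
  obtain ⟨u, hu, hlt⟩ := exists_dual_lt_of_zero_mem_convexHull h0 M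
  exact (hM u hu).not_gt hlt

/-- The dual objective `f(u) = (1/4)‖Σ u_i z_i‖² − Σ u_i` is unbounded from below on the
nonnegative orthant iff the origin belongs to `L = conv{z_1, …, z_m}`. -/
theorem dual_unbounded_iff_zero_mem_L
    (n m : ℕ) (hn : 0 < n) (hm : 0 < m)
    (z : Fin m → EuclideanSpace ℝ (Fin n)) :
    (¬ ∃ M : ℝ, ∀ u : Fin m → ℝ, (∀ i, 0 ≤ u i) →
        M ≤ (1 / 4) * ‖∑ i, u i • z i‖ ^ 2 - ∑ i, u i) ↔
      (0 : EuclideanSpace ℝ (Fin n)) ∈ convexHull ℝ (Set.range z) :=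
  dual_unbounded_iff_zero_mem_L_general n m z
end

section
/- Let c* maximize t_L(c) over the unit sphere {c ∈ ℝⁿ : ‖c‖ = 1}. Then: (1) if t_L(c*) > 0, the projection of the origin onto L equals c* · t_L(c*); (2) if t_L(c*) ≤ 0, the projection of the origin onto L equals 0 (i.e. 0 ∈ L). -/
open RealInnerProductSpace

/-!
If `ρ ≠ 0` is the point of `L` nearest the origin, the variational inequality `‖ρ‖² ≤ ⟪ρ, w⟫`
on `L` says that the unit vector `ρ / ‖ρ‖` has `t_L ≥ ‖ρ‖`. Conversely `t_L(c) ≤ ⟪c, ρ⟫ ≤ ‖ρ‖`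
for every unit `c`, so the maximin value is `‖ρ‖` and Cauchy–Schwarz is tight at `c*`, forcing
`ρ = ‖ρ‖ • c*`. If `ρ = 0`, the same upper bound gives `t_L(c*) ≤ 0`.
-/

open Set

section

variable {F : Type*} [NormedAddCommGroup F] [InnerProductSpace ℝ F]

theorem iInf_inner_le_inner_of_mem_convexHull {ι : Type*} [Finite ι] (z : ι → F) (c : F)
    {w : F} (hw : w ∈ convexHull ℝ (range z)) : ⨅ i, ⟪c, z i⟫ ≤ ⟪c, w⟫ := by
  have hz : range z ⊆ {w | ⨅ i, ⟪c, z i⟫ ≤ ⟪c, w⟫} :=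
    range_subset_iff.2 fun i => ciInf_le (finite_range fun i => ⟪c, z i⟫).bddBelow i
  exact convexHull_min hz (convex_halfSpace_ge (innerₛₗ ℝ c).isLinear _) hw

theorem sq_norm_le_inner_of_forall_norm_le {K : Set F} (hK : Convex ℝ K) {ρ : F} (hρ : ρ ∈ K)
    (hmin : ∀ w ∈ K, ‖ρ‖ ≤ ‖w‖) {w : F} (hw : w ∈ K) : ‖ρ‖ ^ 2 ≤ ⟪ρ, w⟫ := by
  have : Nonempty K := ⟨⟨ρ, hρ⟩⟩
  have hinf : ‖0 - ρ‖ = ⨅ w : K, ‖0 - (w : F)‖ := by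
    simp only [zero_sub, norm_neg]
    exact le_antisymm (le_ciInf fun w => hmin w w.2)
      (ciInf_le (f := fun w : K => ‖(w : F)‖) ⟨0, by rintro _ ⟨w, rfl⟩; positivity⟩ ⟨ρ, hρ⟩)
  have hvar := (norm_eq_iInf_iff_real_inner_le_zero hK hρ).1 hinf w hw
  rw [zero_sub, inner_neg_left, inner_sub_right, real_inner_self_eq_norm_sq] at hvar
  linarith

theorem norm_le_iInf_inner_normalize {ι : Type*} [Finite ι] (z : ι → F) {ρ : F}
    (hρ : ρ ∈ convexHull ℝ (range z)) (hmin : ∀ w ∈ convexHull ℝ (range z), ‖ρ‖ ≤ ‖w‖) :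
    ‖ρ‖ ≤ ⨅ i, ⟪‖ρ‖⁻¹ • ρ, z i⟫ := by
  have : Nonempty ι := range_nonempty_iff_nonempty.1 (convexHull_nonempty_iff.1 ⟨ρ, hρ⟩)
  refine le_ciInf fun i => ?_
  have hvar := sq_norm_le_inner_of_forall_norm_le (convex_convexHull ℝ _) hρ hmin
    (subset_convexHull ℝ _ (mem_range_self i))
  calc ‖ρ‖ = ‖ρ‖⁻¹ * ‖ρ‖ ^ 2 := by rw [sq, ← mul_assoc, inv_mul_mul_self]
    _ ≤ ‖ρ‖⁻¹ * ⟪ρ, z i⟫ := by gcongr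
    _ = ⟪‖ρ‖⁻¹ • ρ, z i⟫ := (real_inner_smul_left _ _ _).symm

theorem eq_norm_smul_of_inner_eq_norm {c x : F} (hc : ‖c‖ = 1) (h : ⟪c, x⟫ = ‖x‖) :
    x = ‖x‖ • c := by
  have := inner_eq_norm_mul_iff_real.1 (by rw [h, hc, one_mul] : ⟪c, x⟫ = ‖c‖ * ‖x‖)
  rw [this, hc, one_smul]

end

theorem projection_via_sphere_maximin_general
    (n m : ℕ)
    (z : Fin m → EuclideanSpace ℝ (Fin n))
    (tL : EuclideanSpace ℝ (Fin n) → ℝ)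
    (htL : ∀ c, tL c = ⨅ i : Fin m, ⟪c, z i⟫)
    (cstar : EuclideanSpace ℝ (Fin n))
    (hcstar : ‖cstar‖ = 1)
    (hcstarMax : ∀ c : EuclideanSpace ℝ (Fin n), ‖c‖ = 1 → tL c ≤ tL cstar)
    (ρ : EuclideanSpace ℝ (Fin n))
    (hρ : ρ ∈ convexHull ℝ (Set.range z))
    (hρMin : ∀ w ∈ convexHull ℝ (Set.range z), ‖ρ‖ ≤ ‖w‖) :
    (0 < tL cstar → ρ = tL cstar • cstar) ∧
    (tL cstar ≤ 0 → ρ = 0) := by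
  have hinner : tL cstar ≤ ⟪cstar, ρ⟫ :=
    htL cstar ▸ iInf_inner_le_inner_of_mem_convexHull z cstar hρ
  have hcs : ⟪cstar, ρ⟫ ≤ ‖ρ‖ := by simpa [hcstar] using real_inner_le_norm cstar ρ
  rcases eq_or_ne ρ 0 with rfl | hρ0
  · exact ⟨fun h => by rw [inner_zero_right] at hinner; linarith, fun _ => rfl⟩
  have hlower : ‖ρ‖ ≤ tL cstar :=
    (htL _ ▸ norm_le_iInf_inner_normalize z hρ hρMin).trans
      (hcstarMax _ (norm_smul_inv_norm (𝕜 := ℝ) hρ0))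
  have hvalue : tL cstar = ‖ρ‖ := by linarith
  refine ⟨fun _ => ?_, fun h => absurd (norm_pos_iff.2 hρ0) (by linarith)⟩
  rw [hvalue]
  exact eq_norm_smul_of_inner_eq_norm hcstar (by linarith)

/-- Let `c*` maximize `t_L(c) = min_i ⟪c, z_i⟫` over the unit sphere. Then:
(1) if `t_L(c*) > 0`, the projection `ρ` of the origin onto `L` equals `t_L(c*) • c*`;
(2) if `t_L(c*) ≤ 0`, then `ρ = 0`. -/
theorem projection_via_sphere_maximin
    (n m : ℕ) (hn : 0 < n) (hm : 0 < m)
    (z : Fin m → EuclideanSpace ℝ (Fin n))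
    (tL : EuclideanSpace ℝ (Fin n) → ℝ)
    (htL : ∀ c, tL c = ⨅ i : Fin m, ⟪c, z i⟫)
    (cstar : EuclideanSpace ℝ (Fin n))
    (hcstar : ‖cstar‖ = 1)
    (hcstarMax : ∀ c : EuclideanSpace ℝ (Fin n), ‖c‖ = 1 → tL c ≤ tL cstar)
    (ρ : EuclideanSpace ℝ (Fin n))
    (hρ : ρ ∈ convexHull ℝ (Set.range z))
    (hρMin : ∀ w ∈ convexHull ℝ (Set.range z), ‖ρ‖ ≤ ‖w‖) :
    (0 < tL cstar → ρ = tL cstar • cstar) ∧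
    (tL cstar ≤ 0 → ρ = 0) :=
  projection_via_sphere_maximin_general n m z tL htL cstar hcstar hcstarMax ρ hρ hρMin
end

section
/- Suppose 0 ∉ L and ĉ maximizes t_L(c) over the closed unit ball {c ∈ ℝⁿ : ‖c‖ ≤ 1}. Then: (1) t_L(ĉ) > 0; (2) the maximizer is unique, i.e. any c₁ with ‖c₁‖ ≤ 1 and t_L(c₁) = t_L(ĉ) satisfies c₁ = ĉ. -/
open RealInnerProductSpace Metric

/-! The function `t_L(c) = min_i ⟪c, z_i⟫` is superadditive and positively homogeneous. Separating
`0` from `L` gives some `c` with `t_L(c) > 0`, so the maximum over the unit ball is positive, and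
homogeneity forces every maximizer onto the unit sphere. Superadditivity makes the midpoint of two
maximizers again a maximizer; strict convexity of the ball puts it strictly inside unless the two
maximizers coincide. -/

section PositivelyHomogeneous

variable {E : Type*} [NormedAddCommGroup E] [NormedSpace ℝ E] {f : E → ℝ} {c x : E}

lemma map_zero_of_map_smul_nonneg (hsmul : ∀ r : ℝ, 0 ≤ r → ∀ x, f (r • x) = r * f x) :
    f 0 = 0 := by
  simpa using hsmul 0 le_rfl 0

lemma smul_norm_inv_mem_closedBall (x : E) : ‖x‖⁻¹ • x ∈ closedBall (0 : E) 1 := by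
  rw [mem_closedBall_zero_iff, norm_smul, norm_inv, norm_norm]
  exact inv_mul_le_one

lemma pos_of_isMaxOn_closedBall (hsmul : ∀ r : ℝ, 0 ≤ r → ∀ x, f (r • x) = r * f x)
    (hmax : IsMaxOn f (closedBall 0 1) c) (hx : 0 < f x) : 0 < f c := by
  have hx0 : x ≠ 0 := by
    rintro rfl
    simp [map_zero_of_map_smul_nonneg hsmul] at hx
  calc 0 < ‖x‖⁻¹ * f x := mul_pos (inv_pos.mpr (norm_pos_iff.mpr hx0)) hx
    _ = f (‖x‖⁻¹ • x) := (hsmul _ (inv_nonneg.mpr (norm_nonneg x)) x).symm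
    _ ≤ f c := hmax (smul_norm_inv_mem_closedBall x)

lemma norm_eq_one_of_isMaxOn_closedBall (hsmul : ∀ r : ℝ, 0 ≤ r → ∀ x, f (r • x) = r * f x)
    (hmax : IsMaxOn f (closedBall 0 1) c) (hc : c ∈ closedBall 0 1) (hpos : 0 < f c) :
    ‖c‖ = 1 := by
  have hc0 : 0 < ‖c‖ := by
    refine norm_pos_iff.mpr fun h => ?_
    simp [h, map_zero_of_map_smul_nonneg hsmul] at hpos
  have hle : ‖c‖⁻¹ * f c ≤ 1 * f c := by
    rw [← hsmul _ (inv_nonneg.mpr hc0.le), one_mul]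
    exact hmax (smul_norm_inv_mem_closedBall c)
  have : 1 ≤ ‖c‖ := (inv_le_one₀ hc0).mp (le_of_mul_le_mul_right hle hpos)
  exact le_antisymm (mem_closedBall_zero_iff.mp hc) this

lemma eq_of_isMaxOn_closedBall [StrictConvexSpace ℝ E] (hadd : ∀ x y, f x + f y ≤ f (x + y))
    (hsmul : ∀ r : ℝ, 0 ≤ r → ∀ x, f (r • x) = r * f x)
    (hmax : IsMaxOn f (closedBall 0 1) c) (hc : c ∈ closedBall 0 1) (hpos : 0 < f c)
    (hx : x ∈ closedBall 0 1) (hfx : f x = f c) : x = c := by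
  set m : E := (1 / 2 : ℝ) • (x + c)
  have hm : m ∈ closedBall 0 1 := by
    simpa only [m, smul_add] using
      convex_closedBall (0 : E) 1 hx hc (by norm_num : (0 : ℝ) ≤ 1 / 2) (by norm_num) (by norm_num)
  have hfm : f c ≤ f m := by
    rw [hsmul _ (by norm_num)]
    linarith [hadd x c]
  have hmax_m : IsMaxOn f (closedBall 0 1) m := fun y hy => (hmax hy).trans hfm
  have hm1 := norm_eq_one_of_isMaxOn_closedBall hsmul hmax_m hm (hpos.trans_le hfm)
  have hx1 := norm_eq_one_of_isMaxOn_closedBall hsmul (fun y hy => (hmax hy).trans hfx.ge) hx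
    (hfx ▸ hpos)
  have hc1 := norm_eq_one_of_isMaxOn_closedBall hsmul hmax hc hpos
  by_contra hne
  have : ‖m‖ < ‖x‖ := (norm_midpoint_lt_iff (hx1.trans hc1.symm)).mpr hne
  linarith

end PositivelyHomogeneous

section MinInner

variable {ι E : Type*} [NormedAddCommGroup E] [InnerProductSpace ℝ E] (z : ι → E)

lemma iInf_inner_smul_left {r : ℝ} (hr : 0 ≤ r) (c : E) :
    ⨅ i, ⟪r • c, z i⟫ = r * ⨅ i, ⟪c, z i⟫ := by
  rw [Real.mul_iInf_of_nonneg hr]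
  simp only [real_inner_smul_left]

variable [Finite ι] [Nonempty ι]

lemma iInf_inner_add_iInf_inner_le (c d : E) :
    (⨅ i, ⟪c, z i⟫) + ⨅ i, ⟪d, z i⟫ ≤ ⨅ i, ⟪c + d, z i⟫ := by
  refine le_ciInf fun i => ?_
  rw [inner_add_left]
  exact add_le_add (ciInf_le (Finite.bddBelow_range fun i => ⟪c, z i⟫) i)
    (ciInf_le (Finite.bddBelow_range fun i => ⟪d, z i⟫) i)

lemma exists_iInf_inner_pos_of_zero_notMem_convexHull [CompleteSpace E]
    (h0 : (0 : E) ∉ convexHull ℝ (Set.range z)) : ∃ c : E, 0 < ⨅ i, ⟪c, z i⟫ := by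
  obtain ⟨f, u, hfu, hsep⟩ := geometric_hahn_banach_point_closed (convex_convexHull ℝ _)
    ((Set.finite_range z).isClosed_convexHull ℝ) h0
  refine ⟨(InnerProductSpace.toDual ℝ E).symm f, (by simpa using hfu : (0 : ℝ) < u).trans_le ?_⟩
  refine le_ciInf fun i => ?_
  rw [InnerProductSpace.toDual_symm_apply]
  exact (hsep _ (subset_convexHull ℝ _ ⟨i, rfl⟩)).le

end MinInner

theorem ball_maximizer_positive_and_unique_general
    (n m : ℕ) (hm : 0 < m)
    (z : Fin m → EuclideanSpace ℝ (Fin n))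
    (tL : EuclideanSpace ℝ (Fin n) → ℝ)
    (htL : ∀ c, tL c = ⨅ i : Fin m, ⟪c, z i⟫)
    (h0L : (0 : EuclideanSpace ℝ (Fin n)) ∉ convexHull ℝ (Set.range z))
    (chat : EuclideanSpace ℝ (Fin n))
    (hchat : ‖chat‖ ≤ 1)
    (hchatMax : ∀ c : EuclideanSpace ℝ (Fin n), ‖c‖ ≤ 1 → tL c ≤ tL chat) :
    0 < tL chat ∧
      ∀ c₁ : EuclideanSpace ℝ (Fin n), ‖c₁‖ ≤ 1 → tL c₁ = tL chat → c₁ = chat := by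
  have : Nonempty (Fin m) := Fin.pos_iff_nonempty.mp hm
  have hsmul : ∀ r : ℝ, 0 ≤ r → ∀ c, tL (r • c) = r * tL c := fun r hr c => by
    simp only [htL, iInf_inner_smul_left z hr]
  have hadd : ∀ c d, tL c + tL d ≤ tL (c + d) := fun c d => by
    simpa only [htL] using iInf_inner_add_iInf_inner_le z c d
  have hmax : IsMaxOn tL (closedBall 0 1) chat := fun c hc =>
    hchatMax c (mem_closedBall_zero_iff.mp hc)
  obtain ⟨c, hc⟩ := exists_iInf_inner_pos_of_zero_notMem_convexHull z h0L
  have hpos : 0 < tL chat := pos_of_isMaxOn_closedBall hsmul hmax (hc.trans_eq (htL c).symm)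
  exact ⟨hpos, fun c₁ hc₁ heq => eq_of_isMaxOn_closedBall hadd hsmul hmax
    (mem_closedBall_zero_iff.mpr hchat) hpos (mem_closedBall_zero_iff.mpr hc₁) heq⟩

/-- Suppose `0 ∉ L` and `ĉ` maximizes `t_L` over the closed unit ball. Then
(1) `t_L(ĉ) > 0` and (2) the maximizer is unique. -/
theorem ball_maximizer_positive_and_unique
    (n m : ℕ) (hn : 0 < n) (hm : 0 < m)
    (z : Fin m → EuclideanSpace ℝ (Fin n))
    (tL : EuclideanSpace ℝ (Fin n) → ℝ)
    (htL : ∀ c, tL c = ⨅ i : Fin m, ⟪c, z i⟫)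
    (h0L : (0 : EuclideanSpace ℝ (Fin n)) ∉ convexHull ℝ (Set.range z))
    (chat : EuclideanSpace ℝ (Fin n))
    (hchat : ‖chat‖ ≤ 1)
    (hchatMax : ∀ c : EuclideanSpace ℝ (Fin n), ‖c‖ ≤ 1 → tL c ≤ tL chat) :
    0 < tL chat ∧
      ∀ c₁ : EuclideanSpace ℝ (Fin n), ‖c₁‖ ≤ 1 → tL c₁ = tL chat → c₁ = chat :=
  ball_maximizer_positive_and_unique_general n m hm z tL htL h0L chat hchat hchatMax
end
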